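/- arXiv:1804.01445 — 2 statements merged into one kernel-verified Lean document; each statement's English description precedes it below -/
import Mathlib

section
/- Let q be a positive integer and m, n positive integers with gcd(mn,q)=1. Then Σ⁺_{χ(q)} χ(m)χ̄(n) = (1/2)·( Σ_{v,w: vw=q, w | m−n} μ(v)φ(w) + Σ_{v,w: vw=q, w | m+n} μ(v)φ(w) ). -/
open scoped BigOperators
open Complex

noncomputable section

/-- `e(x) = e^{2πix}`. -/
def e (x : ℝ) : ℂ := Complex.exp (2 * Real.pi * Complex.I * x)

/-- The root number `ε(χ) = q^{-1/2} Σ_{h mod q} χ(h) e(h/q)`. -/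
def rootNumber (q : ℕ) (χ : DirichletCharacter ℂ q) : ℂ :=
  (q : ℂ) ^ (-(1/2 : ℂ)) * ∑ h ∈ Finset.range q, χ (h : ZMod q) * e ((h : ℝ) / q)

/-- The complex-conjugate character `χ̄`. -/
def conjChar (q : ℕ) (χ : DirichletCharacter ℂ q) : DirichletCharacter ℂ q :=
  χ.ringHomComp (starRingEnd ℂ)

/-- `χ` is an even primitive Dirichlet character. -/
def IsEvenPrimitive {q : ℕ} (χ : DirichletCharacter ℂ q) : Prop :=
  χ.conductor = q ∧ χ (-1) = 1

/-- Sum over even primitive characters mod `q`. -/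
def sumEvenPrimitive (q : ℕ) (f : DirichletCharacter ℂ q → ℂ) : ℂ :=
  ∑ᶠ χ ∈ {χ : DirichletCharacter ℂ q | IsEvenPrimitive χ}, f χ

/-- `φ⁺(q)`: the number of even primitive characters mod `q`. -/
def phiPlus (q : ℕ) : ℕ := Nat.card {χ : DirichletCharacter ℂ q // IsEvenPrimitive χ}

/-- The value `L(s,χ)` of the Dirichlet L-function (junk value `0` for modulus `0`). -/
def Lval {q : ℕ} (χ : DirichletCharacter ℂ q) (s : ℂ) : ℂ :=
  if h : q = 0 then 0 else
    haveI : NeZero q := ⟨h⟩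
    DirichletCharacter.LFunction χ s

/-!
For a unit `a` mod `q` and `w ∣ q`, the characters mod `q` that factor through level `w` are
the lifts of the characters mod `w`, so by orthogonality they sum at `a` to `φ(w)` if
`a ≡ 1 (mod w)` and to `0` otherwise. A character factors through `w` exactly when its
conductor divides `w`, so Möbius inversion over the divisors of `q` isolates the primitive
characters: `Σ_{χ primitive} χ(a) = Σ_{vw = q, a ≡ 1 (w)} μ(v) φ(w)`. Even characters are picked
out by `(χ(a) + χ(-a)) / 2`, and for `a = m n⁻¹` the conditions `a ≡ ±1 (mod w)` read `w ∣ m ∓ n`.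
-/

namespace DirichletCharacter

open Finset ArithmeticFunction
open scoped Classical

variable {R : Type*} [CommRing R] {n : ℕ}

lemma apply_add_apply_neg [NoZeroDivisors R] (χ : DirichletCharacter R n) (a : ZMod n) :
    χ a + χ (-a) = if χ.Even then 2 * χ a else 0 := by
  by_cases hχ : χ.Even
  · rw [if_pos hχ, hχ.eval_neg, two_mul]
  · rw [if_neg hχ, (χ.even_or_odd.resolve_left hχ).eval_neg, add_neg_cancel]

lemma two_mul_sum_even_apply [NoZeroDivisors R] (s : Finset (DirichletCharacter R n))
    (a : ZMod n) : 2 * ∑ χ ∈ s with χ.Even, χ a = ∑ χ ∈ s, χ a + ∑ χ ∈ s, χ (-a) := by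
  rw [← sum_add_distrib, sum_filter, mul_sum]
  exact sum_congr rfl fun χ _ ↦ by rw [apply_add_apply_neg, mul_ite, mul_zero]

lemma sum_divisors_sum_conductor_eq [IsDomain R] [NeZero n] {M : Type*} [AddCommMonoid M]
    {d : ℕ} (hd : d ∣ n) (f : DirichletCharacter R n → M) :
    ∑ e ∈ d.divisors, ∑ χ with χ.conductor = e, f χ = ∑ χ with χ.FactorsThrough d, f χ := by
  have hd₀ : d ≠ 0 := by rintro rfl; exact NeZero.ne n (zero_dvd_iff.mp hd)
  rw [← sum_fiberwise_of_maps_to (s := {χ | χ.FactorsThrough d}) (g := conductor)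
    fun χ hχ ↦ Nat.mem_divisors.mpr
      ⟨(mem_conductorSet_iff_conductor_dvd χ hd).mp (mem_filter.mp hχ).2, hd₀⟩]
  refine sum_congr rfl fun e he ↦ sum_congr ?_ fun _ _ ↦ rfl
  ext χ
  simp only [mem_filter, mem_univ, true_and, iff_and_self]
  rintro rfl
  exact (mem_conductorSet_iff_conductor_dvd χ hd).mpr (Nat.dvd_of_mem_divisors he)

variable {F : Type*} [Field F] [IsSepClosed F] [CharZero F] [NeZero n]

lemma sum_factorsThrough_apply {d : ℕ} (hd : d ∣ n) {a : ZMod n} (ha : IsUnit a) :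
    ∑ χ : DirichletCharacter F n with χ.FactorsThrough d, χ a =
      if (a.cast : ZMod d) = 1 then (d.totient : F) else 0 := by
  have : NeZero d := ⟨by rintro rfl; exact NeZero.ne n (zero_dvd_iff.mp hd)⟩
  rw [← sum_characters_eq F (a.cast : ZMod d)]
  refine (sum_bij (fun ψ _ ↦ changeLevel hd ψ) (fun ψ _ ↦ ?_) (fun _ _ _ _ h ↦
    changeLevel_injective hd h) (fun χ hχ ↦ ?_) (fun ψ _ ↦ ?_)).symm
  · simpa using changeLevel_factorsThrough ψ hd
  · obtain ⟨-, ψ, rfl⟩ := (mem_filter.mp hχ).2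
    exact ⟨ψ, mem_univ ψ, rfl⟩
  · rw [← ha.unit_spec, changeLevel_eq_cast_of_dvd ψ hd]

lemma sum_isPrimitive_apply {a : ZMod n} (ha : IsUnit a) :
    ∑ χ : DirichletCharacter F n with χ.IsPrimitive, χ a =
      ∑ p ∈ n.divisorsAntidiagonal,
        if (a.cast : ZMod p.2) = 1 then (moebius p.1 * p.2.totient : F) else 0 := by
  have hinv := (sum_eq_iff_sum_mul_moebius_eq_on (R := F)
    (f := fun e ↦ ∑ χ : DirichletCharacter F n with χ.conductor = e, χ a)
    (g := fun d ↦ if (a.cast : ZMod d) = 1 then (d.totient : F) else 0) {d | d ∣ n}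
    fun _ _ hde hd ↦ hde.trans hd).mp
    (fun d _ hd ↦ (sum_divisors_sum_conductor_eq hd _).trans (sum_factorsThrough_apply hd ha))
    n (Nat.pos_of_ne_zero (NeZero.ne n)) dvd_rfl
  simp only [mul_ite, mul_zero] at hinv
  exact (sum_congr (by simp [isPrimitive_def]) fun _ _ ↦ rfl).trans hinv.symm

end DirichletCharacter

lemma ZMod.cast_eq_one_iff_dvd_sub {q w : ℕ} (hw : w ∣ q) {a : ZMod q} {m k : ℤ}
    (hk : IsUnit (k : ZMod q)) (ha : a * k = m) :
    (a.cast : ZMod w) = 1 ↔ (w : ℤ) ∣ m - k := by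
  have hk' : IsUnit (k : ZMod w) := by
    simpa [ZMod.cast_intCast hw] using hk.map (ZMod.castHom hw (ZMod w))
  have hak : (a.cast : ZMod w) * k = m := by
    rw [← ZMod.cast_intCast hw k, ← ZMod.cast_mul hw, ha, ZMod.cast_intCast hw]
  rw [← hk'.mul_eq_right, hak, eq_comm, ZMod.intCast_eq_intCast_iff_dvd_sub]

open scoped Classical in
lemma sumEvenPrimitive_eq_sum (q : ℕ) (f : DirichletCharacter ℂ q → ℂ) :
    sumEvenPrimitive q f = ∑ χ with χ.IsPrimitive ∧ χ.Even, f χ := by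
  rw [sumEvenPrimitive, ← finsum_mem_coe_finset, Finset.coe_filter_univ]
  rfl

open DirichletCharacter Finset in
theorem even_primitive_orthogonality_general (q : ℕ) (hq : 0 < q) (m n : ℕ)
    (h : Nat.Coprime (m * n) q) :
    sumEvenPrimitive q (fun χ => χ (m : ZMod q) * (starRingEnd ℂ) (χ (n : ZMod q))) =
      (1/2 : ℂ) *
        ((∑ p ∈ Nat.divisorsAntidiagonal q,
            if (p.2 : ℤ) ∣ ((m : ℤ) - n) then
              (ArithmeticFunction.moebius p.1 : ℂ) * (Nat.totient p.2 : ℂ) else 0) +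
          (∑ p ∈ Nat.divisorsAntidiagonal q,
            if (p.2 : ℤ) ∣ ((m : ℤ) + n) then
              (ArithmeticFunction.moebius p.1 : ℂ) * (Nat.totient p.2 : ℂ) else 0)) := by
  have : NeZero q := ⟨hq.ne'⟩
  classical
  obtain ⟨hmq, hnq⟩ := Nat.coprime_mul_iff_left.mp h
  have hm : IsUnit ((m : ℤ) : ZMod q) := by simpa using (ZMod.isUnit_iff_coprime m q).mpr hmq
  have hn : IsUnit ((n : ℤ) : ZMod q) := by simpa using (ZMod.isUnit_iff_coprime n q).mpr hnq
  obtain ⟨a, han⟩ : ∃ a : ZMod q, a * (n : ℤ) = (m : ℤ) :=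
    ⟨(m : ℤ) * ↑hn.unit⁻¹, by rw [mul_assoc, Units.inv_mul_of_eq hn.unit_spec, mul_one]⟩
  have ha : IsUnit a := isUnit_of_mul_isUnit_left (han ▸ hm)
  have hconj (χ : DirichletCharacter ℂ q) : χ m * starRingEnd ℂ (χ n) = χ a := by
    have hχn : χ n * χ⁻¹ n = 1 := by
      rw [← MulChar.mul_apply, mul_inv_cancel, MulChar.one_apply (by simpa using hn)]
    rw [← Int.cast_natCast m, ← han, map_mul, mul_assoc, starRingEnd_apply, MulChar.star_apply',
      Int.cast_natCast, hχn, mul_one]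
  have hdvd {p : ℕ × ℕ} (hp : p ∈ q.divisorsAntidiagonal) : p.2 ∣ q :=
    Nat.dvd_of_mem_divisors (Nat.snd_mem_divisors_of_mem_antidiagonal hp)
  rw [sumEvenPrimitive_eq_sum, sum_congr rfl fun χ _ ↦ hconj χ, ← filter_filter,
    one_div, eq_inv_mul_iff_mul_eq₀ two_ne_zero, two_mul_sum_even_apply,
    sum_isPrimitive_apply ha, sum_isPrimitive_apply ha.neg]
  congr 1 <;> refine sum_congr rfl fun p hp ↦ if_congr ?_ rfl rfl
  · exact ZMod.cast_eq_one_iff_dvd_sub (hdvd hp) hn han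
  · rw [ZMod.cast_eq_one_iff_dvd_sub (hdvd hp) hn (by rw [neg_mul, han, Int.cast_neg]), ← dvd_neg,
      neg_sub, sub_neg_eq_add, add_comm]

/-- Lemma 4.2 (orthogonality for even primitive characters). -/
theorem even_primitive_orthogonality (q : ℕ) (hq : 0 < q) (m n : ℕ)
    (hm : 0 < m) (hn : 0 < n) (h : Nat.Coprime (m * n) q) :
    sumEvenPrimitive q (fun χ => χ (m : ZMod q) * (starRingEnd ℂ) (χ (n : ZMod q))) =
      (1/2 : ℂ) *
        ((∑ p ∈ Nat.divisorsAntidiagonal q,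
            if (p.2 : ℤ) ∣ ((m : ℤ) - n) then
              (ArithmeticFunction.moebius p.1 : ℂ) * (Nat.totient p.2 : ℂ) else 0) +
          (∑ p ∈ Nat.divisorsAntidiagonal q,
            if (p.2 : ℤ) ∣ ((m : ℤ) + n) then
              (ArithmeticFunction.moebius p.1 : ℂ) * (Nat.totient p.2 : ℂ) else 0)) :=
  even_primitive_orthogonality_general q hq m n h
end
end

section
/- Let P be a real polynomial. There exists a constant C = C(P) such that for all real y ≥ 2, | Σ_{b ≤ y} (Λ(b)/b)·P(log(y/b)/log y) − (log y)·∫₀¹ P(u) du | ≤ C. -/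
/-!
Write `A(t) = ∑_{n ≤ t} Λ(n)/n`. Mertens' estimate `A(t) = log t + O(1)` follows from
`log N! = ∑_{n ≤ N} Λ(n) ⌊N/n⌋`, Stirling's bound for `log N!` and Chebyshev's bound `ψ(N) = O(N)`.
Partial summation against `A`, followed by integration by parts against `log`, gives for any
`C¹` weight `f` that `∑_{n ≤ y} f(n) Λ(n)/n = ∫₁^y f(t) dt/t + O(|f(y)| + ∫₁^y |f'|)`.
For `f(t) = P(u(t))` with `u(t) = log(y/t)/log y` the substitution `u = u(t)` turns the main term
into `log y ∫₀¹ P` and the error into `O(|P(0)| + ∫₀¹ |P'|)`, uniformly in `y`.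
-/

open Finset Real MeasureTheory
open ArithmeticFunction hiding log
open scoped Nat

theorem sum_Ioc_log_eq_sum_vonMangoldt_mul_div (N : ℕ) :
    ∑ n ∈ Ioc 0 N, log n = ∑ n ∈ Ioc 0 N, Λ n * (N / n : ℕ) := by
  rw [← sum_Ioc_mul_zeta_eq_sum, vonMangoldt_mul_zeta]
  simp only [log_apply]

theorem sum_Ioc_log_eq_log_factorial (N : ℕ) : ∑ n ∈ Ioc 0 N, log n = log N ! := by
  induction N with
  | zero => simp
  | succ N ih =>
    rw [sum_Ioc_succ_top N.zero_le, ih, Nat.factorial_succ, Nat.cast_mul,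
      Real.log_mul (by positivity) (by positivity), add_comm]

theorem sub_le_sum_Ioc_log (N : ℕ) : N * log N - N ≤ ∑ n ∈ Ioc 0 N, log n := by
  rcases N.eq_zero_or_pos with rfl | hN
  · simp
  rw [sum_Ioc_log_eq_log_factorial]
  refine le_trans ?_ (Stirling.le_log_factorial_stirling hN.ne')
  have : 0 ≤ log N := Real.log_natCast_nonneg N
  have : 0 ≤ log (2 * π) := Real.log_nonneg (by linarith [Real.pi_gt_three])
  linarith

theorem sum_Ioc_log_le (N : ℕ) : ∑ n ∈ Ioc 0 N, log n ≤ N * log N := by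
  calc ∑ n ∈ Ioc 0 N, log n ≤ ∑ _n ∈ Ioc 0 N, log N :=
        sum_le_sum fun n hn ↦ Real.log_le_log (by simp_all) (by simp_all)
    _ = N * log N := by simp

theorem abs_sum_Ioc_vonMangoldt_div_sub_log_le (N : ℕ) :
    |∑ n ∈ Ioc 0 N, Λ n / n - log N| ≤ log 4 + 4 := by
  rcases N.eq_zero_or_pos with rfl | hN
  · rw [Ioc_self, sum_empty, Nat.cast_zero, log_zero, sub_self, abs_zero]
    positivity
  have hN' : (0 : ℝ) < N := by exact_mod_cast hN
  have hfrac (n : ℕ) : 0 ≤ (N / n : ℝ) - (N / n : ℕ) ∧ (N / n : ℝ) - (N / n : ℕ) ≤ 1 := by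
    rw [← Nat.floor_div_eq_div (K := ℝ)]
    constructor
    · linarith [Nat.floor_le (by positivity : (0 : ℝ) ≤ N / n)]
    · linarith [Nat.lt_floor_add_one ((N : ℝ) / n)]
  have hdiff : N * ∑ n ∈ Ioc 0 N, Λ n / n - ∑ n ∈ Ioc 0 N, log n =
      ∑ n ∈ Ioc 0 N, Λ n * ((N / n : ℝ) - (N / n : ℕ)) := by
    rw [sum_Ioc_log_eq_sum_vonMangoldt_mul_div, mul_sum, ← sum_sub_distrib]
    refine sum_congr rfl fun n _ ↦ by ring
  have hlow : 0 ≤ ∑ n ∈ Ioc 0 N, Λ n * ((N / n : ℝ) - (N / n : ℕ)) :=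
    sum_nonneg fun n _ ↦ mul_nonneg vonMangoldt_nonneg (hfrac n).1
  have hupp : ∑ n ∈ Ioc 0 N, Λ n * ((N / n : ℝ) - (N / n : ℕ)) ≤ (log 4 + 4) * N :=
    calc _ ≤ ∑ n ∈ Ioc 0 N, Λ n :=
          sum_le_sum fun n _ ↦ mul_le_of_le_one_right vonMangoldt_nonneg (hfrac n).2
      _ = Chebyshev.psi N := by simp [Chebyshev.psi]
      _ ≤ (log 4 + 4) * N := Chebyshev.psi_le_const_mul_self N.cast_nonneg
  have h1 := sub_le_sum_Ioc_log N
  have h2 := sum_Ioc_log_le N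
  have hlog4 : 0 ≤ log 4 := Real.log_nonneg (by norm_num)
  have hbound : |N * (∑ n ∈ Ioc 0 N, Λ n / n - log N)| ≤ (log 4 + 4) * N :=
    abs_le.2 ⟨by nlinarith, by nlinarith⟩
  rwa [abs_mul, Nat.abs_cast, mul_comm _ (N : ℝ), mul_le_mul_iff_of_pos_left hN'] at hbound

theorem abs_sum_Icc_vonMangoldt_div_sub_log_le {t : ℝ} (ht : 1 ≤ t) :
    |∑ n ∈ Icc 0 ⌊t⌋₊, Λ n / n - log t| ≤ log 4 + 5 := by
  set N := ⌊t⌋₊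
  have hN : (1 : ℝ) ≤ N := by exact_mod_cast Nat.one_le_floor_iff t |>.2 ht
  have hNt : (N : ℝ) ≤ t := Nat.floor_le (by linarith)
  have hlog_lo : log N ≤ log t := Real.log_le_log (by linarith) hNt
  have hlog_hi : log t - log N ≤ 1 := by
    have := Real.log_le_sub_one_of_pos (show 0 < t / N by positivity)
    rw [Real.log_div (by linarith) (by linarith)] at this
    have : t / N ≤ 2 := by
      rw [div_le_iff₀ (by linarith)]
      linarith [Nat.lt_floor_add_one t]
    linarith
  have hsum : ∑ n ∈ Icc 0 N, Λ n / n = ∑ n ∈ Ioc 0 N, Λ n / n := by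
    rw [Icc_eq_cons_Ioc N.zero_le, sum_cons]
    simp
  have hmertens := abs_sum_Ioc_vonMangoldt_div_sub_log_le N
  rw [hsum, abs_le]
  rw [abs_le] at hmertens
  constructor <;> linarith

section PartialSummation

variable {c : ℕ → ℝ} {f f' : ℝ → ℝ} {y : ℝ}

theorem sum_mul_sub_integral_div_eq (hc : c 0 = 0) (hy : 1 ≤ y)
    (hf : ∀ t ∈ Set.Icc 1 y, HasDerivAt f (f' t) t) (hf' : ContinuousOn f' (Set.Icc 1 y)) :
    ∑ k ∈ Icc 0 ⌊y⌋₊, f k * c k - ∫ t in 1..y, f t / t =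
      f y * (∑ k ∈ Icc 0 ⌊y⌋₊, c k - log y) -
        ∫ t in 1..y, f' t * (∑ k ∈ Icc 0 ⌊t⌋₊, c k - log t) := by
  rw [← Set.uIcc_of_le hy] at hf hf'
  have hpos : ∀ t ∈ Set.uIcc 1 y, 0 < t := by
    rw [Set.uIcc_of_le hy]
    exact fun t ht ↦ by linarith [ht.1]
  have hparts : ∫ t in 1..y, f t / t = f y * log y - ∫ t in 1..y, f' t * log t := by
    simp_rw [div_eq_mul_inv]
    rw [intervalIntegral.integral_mul_deriv_eq_deriv_mul hf
      (fun t ht ↦ hasDerivAt_log (hpos t ht).ne') hf'.intervalIntegrable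
      (continuousOn_inv₀.mono fun t ht ↦ (hpos t ht).ne').intervalIntegrable,
      log_one, mul_zero, sub_zero]
  have hint_log : IntervalIntegrable (fun t ↦ f' t * log t) volume 1 y :=
    (hf'.mul (continuousOn_log.mono fun t ht ↦ (hpos t ht).ne')).intervalIntegrable
  have hderiv : Set.EqOn (deriv f) f' (Set.uIcc 1 y) := fun t ht ↦ (hf t ht).deriv
  rw [Set.uIcc_of_le hy] at hf hf' hderiv
  have habel := sum_mul_eq_sub_integral_mul₀ c hc y (fun t ht ↦ (hf t ht).differentiableAt)
    ((hf'.integrableOn_Icc).congr_fun hderiv.symm measurableSet_Icc)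
  have hA : ∫ t in Set.Ioc 1 y, deriv f t * ∑ k ∈ Icc 0 ⌊t⌋₊, c k =
      ∫ t in 1..y, f' t * ∑ k ∈ Icc 0 ⌊t⌋₊, c k := by
    rw [intervalIntegral.integral_of_le hy]
    exact setIntegral_congr_fun measurableSet_Ioc fun t ht ↦ by
      rw [hderiv (Set.Ioc_subset_Icc_self ht)]
  have hint : IntervalIntegrable (fun t ↦ f' t * ∑ k ∈ Icc 0 ⌊t⌋₊, c k) volume 1 y :=
    (intervalIntegrable_iff_integrableOn_Icc_of_le hy).2
      (integrableOn_mul_sum_Icc c zero_le_one hf'.integrableOn_Icc)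
  simp_rw [mul_sub]
  rw [intervalIntegral.integral_sub hint hint_log, habel, hA, hparts]
  ring

theorem abs_sum_mul_sub_integral_div_le (hc : c 0 = 0) (hy : 1 ≤ y)
    (hf : ∀ t ∈ Set.Icc 1 y, HasDerivAt f (f' t) t) (hf' : ContinuousOn f' (Set.Icc 1 y))
    {K : ℝ} (hK : ∀ t ∈ Set.Icc 1 y, |∑ k ∈ Icc 0 ⌊t⌋₊, c k - log t| ≤ K) :
    |∑ k ∈ Icc 0 ⌊y⌋₊, f k * c k - ∫ t in 1..y, f t / t| ≤
      K * (|f y| + ∫ t in 1..y, |f' t|) := by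
  rw [sum_mul_sub_integral_div_eq hc hy hf hf']
  have hend : |f y * (∑ k ∈ Icc 0 ⌊y⌋₊, c k - log y)| ≤ K * |f y| := by
    rw [abs_mul, mul_comm K]
    exact mul_le_mul_of_nonneg_left (hK y ⟨hy, le_rfl⟩) (abs_nonneg _)
  have hintegral : |∫ t in 1..y, f' t * (∑ k ∈ Icc 0 ⌊t⌋₊, c k - log t)| ≤
      K * ∫ t in 1..y, |f' t| := by
    rw [← intervalIntegral.integral_const_mul, ← Real.norm_eq_abs]
    refine intervalIntegral.norm_integral_le_of_norm_le hy (ae_of_all _ fun t ht ↦ ?_)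
      ((hf'.abs.intervalIntegrable_of_Icc (μ := volume) hy).const_mul K)
    rw [Real.norm_eq_abs, abs_mul, mul_comm K]
    exact mul_le_mul_of_nonneg_left (hK t (Set.Ioc_subset_Icc_self ht)) (abs_nonneg _)
  calc _ ≤ _ := abs_sub _ _
    _ ≤ _ := add_le_add hend hintegral
    _ = _ := by ring

end PartialSummation

noncomputable def logRatio (y t : ℝ) : ℝ := log (y / t) / log y

section LogRatio

variable {y t : ℝ}

theorem hasDerivAt_logRatio (hy : 0 < y) (ht : 0 < t) :
    HasDerivAt (logRatio y) (-(t * log y)⁻¹) t := by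
  have := (((hasDerivAt_inv ht.ne').const_mul y).log (by positivity)).div_const (log y)
  have hfun : logRatio y = fun s ↦ log (y * s⁻¹) / log y :=
    funext fun s ↦ by rw [logRatio, div_eq_mul_inv y s]
  rw [hfun]
  refine this.congr_deriv ?_
  rw [mul_inv, show y * -(t ^ 2)⁻¹ / (y * t⁻¹) = -t⁻¹ by field_simp]
  ring

theorem integral_comp_logRatio_mul_inv (hy : 1 < y) {g : ℝ → ℝ} (hg : Continuous g) :
    ∫ t in 1..y, g (logRatio y t) * (t * log y)⁻¹ = ∫ u in 0..1, g u := by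
  have hpos : ∀ t ∈ Set.uIcc 1 y, 0 < t := fun t ht ↦ by
    rw [Set.uIcc_of_le hy.le] at ht; linarith [ht.1]
  have hderiv : ContinuousOn (fun t ↦ -(t * log y)⁻¹) (Set.uIcc 1 y) := fun t ht ↦
    ((continuousAt_id.mul continuousAt_const).inv₀
      (mul_pos (hpos t ht) (Real.log_pos hy)).ne').neg.continuousWithinAt
  have := intervalIntegral.integral_comp_mul_deriv
    (fun t ht ↦ hasDerivAt_logRatio (by linarith) (hpos t ht)) hderiv hg
  have h1 : logRatio y 1 = 1 := by simp [logRatio, (Real.log_pos hy).ne']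
  have hy' : logRatio y y = 0 := by simp [logRatio, (by linarith : y ≠ 0)]
  simp only [h1, hy', Function.comp_def, mul_neg, intervalIntegral.integral_neg] at this
  rw [intervalIntegral.integral_symm (1 : ℝ) 0, ← this, neg_neg]

end LogRatio

theorem abs_sum_eval_logRatio_mul_sub_le {c : ℕ → ℝ} (hc : c 0 = 0) {y : ℝ} (hy : 1 < y) {K : ℝ}
    (hK : ∀ t ∈ Set.Icc 1 y, |∑ k ∈ Icc 0 ⌊t⌋₊, c k - log t| ≤ K) (P : Polynomial ℝ) :
    |∑ k ∈ Icc 0 ⌊y⌋₊, P.eval (logRatio y k) * c k - log y * ∫ u in 0..1, P.eval u| ≤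
      K * (|P.eval 0| + ∫ u in 0..1, |P.derivative.eval u|) := by
  have hL : 0 < log y := Real.log_pos hy
  have hpos : ∀ t ∈ Set.Icc 1 y, 0 < t := fun t ht ↦ by linarith [ht.1]
  have hpos' : ∀ t ∈ Set.uIcc 1 y, 0 < t := by rwa [Set.uIcc_of_le hy.le]
  set f := fun t ↦ P.eval (logRatio y t)
  set f' := fun t ↦ P.derivative.eval (logRatio y t) * -(t * log y)⁻¹
  have hf : ∀ t ∈ Set.Icc 1 y, HasDerivAt f (f' t) t := fun t ht ↦
    (P.hasDerivAt _).comp t (hasDerivAt_logRatio (by linarith) (hpos t ht))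
  have hf' : ContinuousOn f' (Set.Icc 1 y) := fun t ht ↦
    ((P.derivative.continuous.continuousAt.comp
      (hasDerivAt_logRatio (by linarith) (hpos t ht)).continuousAt).mul
      ((continuousAt_id.mul continuousAt_const).inv₀
        (mul_pos (hpos t ht) hL).ne').neg).continuousWithinAt
  have hmain : ∫ t in 1..y, f t / t = log y * ∫ u in 0..1, P.eval u := by
    rw [← integral_comp_logRatio_mul_inv hy P.continuous, ← intervalIntegral.integral_const_mul]
    refine intervalIntegral.integral_congr fun t ht ↦ ?_
    have := hpos' t ht
    simp only [f]
    field_simp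
  have herr : ∫ t in 1..y, |f' t| = ∫ u in 0..1, |P.derivative.eval u| := by
    rw [← integral_comp_logRatio_mul_inv hy P.derivative.continuous.abs]
    refine intervalIntegral.integral_congr fun t ht ↦ ?_
    simp only [f', abs_mul, abs_neg, abs_inv, abs_of_pos (mul_pos (hpos' t ht) hL)]
  have hfy : f y = P.eval 0 := by simp [f, logRatio]
  rw [← hmain, ← herr, ← hfy]
  exact abs_sum_mul_sub_integral_div_le hc hy.le hf hf' hK

/-- `Σ_{b ≤ y} (Λ(b)/b) P(log(y/b)/log y) = (log y) ∫₀¹ P(u) du + O(1)`. -/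
theorem vonMangoldt_weighted_sum (P : Polynomial ℝ) :
    ∃ C : ℝ, ∀ y : ℝ, 2 ≤ y →
      |(∑ b ∈ Finset.Icc 1 (Nat.floor y),
          (ArithmeticFunction.vonMangoldt b / b) * P.eval (Real.log (y / b) / Real.log y)) -
        Real.log y * ∫ u in (0:ℝ)..1, P.eval u| ≤ C := by
  refine ⟨(Real.log 4 + 5) * (|P.eval 0| + ∫ u in (0:ℝ)..1, |P.derivative.eval u|), fun y hy ↦ ?_⟩
  have hsum : ∑ b ∈ Finset.Icc 1 (Nat.floor y),
        (ArithmeticFunction.vonMangoldt b / b) * P.eval (Real.log (y / b) / Real.log y) =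
      ∑ b ∈ Icc 0 ⌊y⌋₊, P.eval (logRatio y b) * (Λ b / b) := by
    rw [Icc_eq_cons_Ioc (Nat.zero_le _), sum_cons, ← Icc_add_one_left_eq_Ioc]
    simp only [Nat.cast_zero, div_zero, mul_zero, zero_add]
    exact sum_congr rfl fun b _ ↦ mul_comm _ _
  rw [hsum]
  exact abs_sum_eval_logRatio_mul_sub_le (by simp) (by linarith)
    (fun t ht ↦ abs_sum_Icc_vonMangoldt_div_sub_log_le ht.1) P
end
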